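/- Let X₁, S, Z₁, X₂ be mutually independent {0,1}-valued random variables, set Y₁ = X₁ ⊕ S ⊕ Z₁ (mod-2 addition), Y₂ = X₂, Y = (Y₁,Y₂), and V = S. Then: (i) I(X₁ ; Y | V, X₂) = I(X₁ ; Y₁ | S); (ii) I(V,X₁,X₂ ; Y) - I(V,X₁,X₂ ; S) = I(X₁ ; Y₁ | S) + I(S ; Y₁) + H(X₂) - H(S); and (iii) I(V,X₂ ; Y) - I(V,X₂ ; S) = I(S ; Y₁ | X₂) + H(X₂) - H(S). In particular, if X₂ is uniform and S is uniform, the right-hand side of (ii) is at least I(X₁;Y₁|S) and the right-hand side of (iii) is nonnegative. -/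

import Mathlib

open scoped BigOperators
open Classical

noncomputable section

/-- Probability that the random variable `X` equals `x` under the pmf `p`. -/
def pr {Ω α : Type*} [Fintype Ω] (p : Ω → ℝ) (X : Ω → α) (x : α) : ℝ :=
  ∑ ω : Ω, if X ω = x then p ω else 0

/-- Shannon entropy (in bits), with the convention `0 · log₂ 0 = 0`. -/
def ent {Ω α : Type*} [Fintype Ω] (p : Ω → ℝ) (X : Ω → α) : ℝ :=
  -∑ x ∈ Finset.univ.image X, pr p X x * Real.logb 2 (pr p X x)

/-- Conditional entropy `H(X|Y) = H(X,Y) - H(Y)`. -/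
def condEnt {Ω α β : Type*} [Fintype Ω] (p : Ω → ℝ) (X : Ω → α) (Y : Ω → β) : ℝ :=
  ent p (fun ω => (X ω, Y ω)) - ent p Y

/-- Mutual information `I(X;Y) = H(X) + H(Y) - H(X,Y)`. -/
def mi {Ω α β : Type*} [Fintype Ω] (p : Ω → ℝ) (X : Ω → α) (Y : Ω → β) : ℝ :=
  ent p X + ent p Y - ent p (fun ω => (X ω, Y ω))

/-- Conditional mutual information `I(X;Y|Z) = H(X,Z) + H(Y,Z) - H(X,Y,Z) - H(Z)`. -/
def cmi {Ω α β γ : Type*} [Fintype Ω] (p : Ω → ℝ) (X : Ω → α) (Y : Ω → β) (Z : Ω → γ) : ℝ :=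
  ent p (fun ω => (X ω, Z ω)) + ent p (fun ω => (Y ω, Z ω))
    - ent p (fun ω => (X ω, Y ω, Z ω)) - ent p Z

/-- `p` is a probability mass function on the finite sample space `Ω`. -/
def IsPMF {Ω : Type*} [Fintype Ω] (p : Ω → ℝ) : Prop :=
  (∀ ω, 0 ≤ p ω) ∧ ∑ ω : Ω, p ω = 1

/-- The random variables `X` and `Y` are independent under `p`. -/
def IndepRV {Ω α β : Type*} [Fintype Ω] (p : Ω → ℝ) (X : Ω → α) (Y : Ω → β) : Prop :=
  ∀ x y, pr p (fun ω => (X ω, Y ω)) (x, y) = pr p X x * pr p Y y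

end

/-!
Everything follows from two facts about the joint law. First, `X₂ = Y₂` is independent of
`(X₁, S, Y₁)`; hence appending `X₂` to both arguments of a mutual information adds `H(X₂)`,
appending it to the second argument and the condition of a conditional one changes nothing, and
conditioning on it alone changes nothing. With the chain rule
`I(S,X₁;Y₁) = I(S;Y₁) + I(X₁;Y₁|S)` and `I(V; f V) = H(f V)` this gives (i)–(iii).
Second, `Y₁ = S ⊕ W` with `W = X₁ ⊕ Z₁` independent of `S`; if `S` is uniform, so is `Y₁`, and
`I(S;Y₁) = H(Y₁) - H(W) = 1 - H(W) ≥ 0`.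
-/

open Real

section Probability

variable {Ω α β γ δ : Type*} [Fintype Ω] (p : Ω → ℝ)

theorem sum_pr [Fintype α] (X : Ω → α) : ∑ x, pr p X x = ∑ ω, p ω := by
  unfold pr
  rw [Finset.sum_comm]
  simp

theorem pr_false_eq_one_sub (hp : ∑ ω, p ω = 1) (X : Ω → Bool) :
    pr p X false = 1 - pr p X true := by
  have h := sum_pr p X
  rw [Fintype.sum_bool, hp] at h
  linarith

theorem pr_congr {X : Ω → α} {Y : Ω → β} {x : α} {y : β} (h : ∀ ω, Y ω = y ↔ X ω = x) :
    pr p Y y = pr p X x := by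
  simp only [pr, h]

theorem pr_map [Fintype α] (X : Ω → α) (f : α → β) (b : β) :
    pr p (fun ω => f (X ω)) b = ∑ a, if f a = b then pr p X a else 0 := by
  have h : ∀ a, (if f a = b then pr p X a else 0)
      = ∑ ω, if X ω = a then (if f a = b then p ω else 0) else 0 := by
    intro a
    split_ifs <;> simp [pr]
  simp only [h]
  rw [Finset.sum_comm]
  simp [pr]

theorem pr_eq_sum_pr_pair [Fintype β] (X : Ω → α) (Y : Ω → β) (x : α) :
    pr p X x = ∑ y, pr p (fun ω => (X ω, Y ω)) (x, y) := by
  unfold pr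
  rw [Finset.sum_comm]
  simp [ite_and]

theorem IndepRV.comp [Fintype α] [Fintype β] {X : Ω → α} {Y : Ω → β} (h : IndepRV p X Y)
    (f : α → γ) (g : β → δ) : IndepRV p (fun ω => f (X ω)) (fun ω => g (Y ω)) := by
  intro u v
  change pr p (fun ω => Prod.map f g (X ω, Y ω)) (u, v) = _
  rw [pr_map, pr_map, pr_map, Finset.sum_mul_sum, Fintype.sum_prod_type]
  simp only [Prod.map, Prod.mk.injEq, ite_zero_mul_ite_zero, ← h _ _]

end Probability

section Entropy

variable {Ω α β : Type*} [Fintype Ω] (p : Ω → ℝ)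

theorem ent_eq_sum_negMulLog [Fintype α] (X : Ω → α) :
    ent p X = (∑ x, negMulLog (pr p X x)) / log 2 := by
  have hzero : ∀ x ∉ Finset.univ.image X, pr p X x = 0 := fun x hx =>
    Finset.sum_eq_zero fun ω _ => if_neg fun h => hx (Finset.mem_image.2 ⟨ω, by simp, h⟩)
  rw [ent, ← Finset.sum_subset (Finset.subset_univ _) fun x _ hx => by simp [hzero x hx]]
  simp only [negMulLog, logb, Finset.sum_div]
  rw [← Finset.sum_neg_distrib]
  congr 1 with x
  ring

theorem ent_congr {X : Ω → α} {Y : Ω → β} (f : α → β) (g : β → α)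
    (hY : ∀ ω, Y ω = f (X ω)) (hX : ∀ ω, X ω = g (Y ω)) : ent p X = ent p Y := by
  have hgf : ∀ ω, g (f (X ω)) = X ω := fun ω => by rw [← hY, ← hX]
  have hinj : Set.InjOn f (Finset.univ.image X) := by
    rintro _ hx _ hx' h
    obtain ⟨ω, -, rfl⟩ := Finset.mem_image.1 hx
    obtain ⟨ω', -, rfl⟩ := Finset.mem_image.1 hx'
    rw [← hgf ω, h, hgf]
  have hpr : ∀ ω₀, pr p Y (f (X ω₀)) = pr p X (X ω₀) := fun ω₀ => pr_congr p fun ω =>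
    ⟨fun h => by rw [← hgf ω, ← hY, h, hgf], fun h => by rw [hY, h]⟩
  have himage : Finset.univ.image Y = (Finset.univ.image X).image f := by
    rw [Finset.image_image]
    exact Finset.image_congr fun ω _ => hY ω
  rw [ent, ent, himage, Finset.sum_image hinj]
  refine congrArg _ (Finset.sum_congr rfl fun x hx => ?_)
  obtain ⟨ω, -, rfl⟩ := Finset.mem_image.1 hx
  rw [hpr]

theorem IndepRV.ent_pair [Fintype α] [Fintype β] (hp : ∑ ω, p ω = 1) {X : Ω → α} {Y : Ω → β}
    (h : IndepRV p X Y) : ent p (fun ω => (X ω, Y ω)) = ent p X + ent p Y := by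
  simp only [ent_eq_sum_negMulLog, Fintype.sum_prod_type, h _ _, negMulLog_mul,
    Finset.sum_add_distrib, ← Finset.sum_mul, ← Finset.mul_sum, sum_pr, hp]
  ring

variable (hp : ∑ ω, p ω = 1)
include hp

theorem ent_bool_eq_binEntropy (X : Ω → Bool) : ent p X = binEntropy (pr p X true) / log 2 := by
  rw [ent_eq_sum_negMulLog, Fintype.sum_bool, pr_false_eq_one_sub p hp,
    binEntropy_eq_negMulLog_add_negMulLog_one_sub]

theorem ent_bool_le_one (X : Ω → Bool) : ent p X ≤ 1 := by
  rw [ent_bool_eq_binEntropy p hp, div_le_one (log_pos one_lt_two)]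
  exact binEntropy_le_log_two

theorem ent_bool_eq_one {X : Ω → Bool} (h : pr p X true = 1 / 2) : ent p X = 1 := by
  rw [ent_bool_eq_binEntropy p hp, h, one_div, binEntropy_two_inv,
    div_self (log_pos one_lt_two).ne']

end Entropy

section Information

variable {Ω α β γ δ : Type*} [Fintype Ω] (p : Ω → ℝ)

theorem ent_pair_comm (X : Ω → α) (Y : Ω → β) :
    ent p (fun ω => (X ω, Y ω)) = ent p (fun ω => (Y ω, X ω)) :=
  ent_congr p Prod.swap Prod.swap (fun _ => rfl) (fun _ => rfl)

theorem ent_pair_assoc (X : Ω → α) (Y : Ω → β) (Z : Ω → γ) :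
    ent p (fun ω => ((X ω, Y ω), Z ω)) = ent p (fun ω => (X ω, Y ω, Z ω)) :=
  ent_congr p (Equiv.prodAssoc α β γ) (Equiv.prodAssoc α β γ).symm (fun _ => rfl) (fun _ => rfl)

theorem ent_pair_comp_self (X : Ω → α) (f : α → β) :
    ent p (fun ω => (X ω, f (X ω))) = ent p X :=
  Eq.symm (ent_congr p (fun x => (x, f x)) Prod.fst (fun _ => rfl) (fun _ => rfl))

theorem mi_comp_self (X : Ω → α) (f : α → β) :
    mi p X (fun ω => f (X ω)) = ent p (fun ω => f (X ω)) := by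
  rw [mi, ent_pair_comp_self]
  ring

theorem mi_congr_left {X : Ω → α} {X' : Ω → γ} (f : α → γ) (g : γ → α)
    (hX' : ∀ ω, X' ω = f (X ω)) (hX : ∀ ω, X ω = g (X' ω)) (Y : Ω → β) :
    mi p X Y = mi p X' Y := by
  have hXY : ent p (fun ω => (X ω, Y ω)) = ent p (fun ω => (X' ω, Y ω)) :=
    ent_congr p (Prod.map f id) (Prod.map g id) (fun ω => by simp [hX']) (fun ω => by simp [hX])
  rw [mi, mi, ent_congr p f g hX' hX, hXY]

theorem mi_pair_eq_mi_add_cmi (X : Ω → α) (Y : Ω → β) (Z : Ω → γ) :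
    mi p (fun ω => (Z ω, X ω)) Y = mi p Z Y + cmi p X Y Z := by
  have h : ent p (fun ω => ((Z ω, X ω), Y ω)) = ent p (fun ω => (X ω, Y ω, Z ω)) :=
    ent_congr p (fun q => (q.1.2, q.2, q.1.1)) (fun q => ((q.2.2, q.1), q.2.1))
      (fun _ => rfl) (fun _ => rfl)
  rw [mi, mi, cmi, h, ent_pair_comm p Z X, ent_pair_comm p Y Z]
  ring

variable [Fintype α] [Fintype β] [Fintype γ] [Fintype δ] (hp : ∑ ω, p ω = 1)
include hp

theorem IndepRV.ent_comp_pair {X : Ω → α} {W : Ω → δ} (h : IndepRV p X W) (f : α → β) :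
    ent p (fun ω => (f (X ω), W ω)) = ent p (fun ω => f (X ω)) + ent p W :=
  (h.comp p f id).ent_pair p hp

theorem cmi_eq_mi_of_indep {X : Ω → α} {Y : Ω → β} {Z : Ω → γ}
    (h : IndepRV p (fun ω => (X ω, Y ω)) Z) : cmi p X Y Z = mi p X Y := by
  rw [cmi, mi, h.ent_comp_pair p hp Prod.fst, h.ent_comp_pair p hp Prod.snd,
    ← ent_pair_assoc, h.ent_pair p hp]
  dsimp only
  ring

theorem mi_pair_pair_of_indep {X : Ω → α} {Y : Ω → β} {W : Ω → δ}
    (h : IndepRV p (fun ω => (X ω, Y ω)) W) :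
    mi p (fun ω => (X ω, W ω)) (fun ω => (Y ω, W ω)) = mi p X Y + ent p W := by
  have hXYW : ent p (fun ω => ((X ω, W ω), Y ω, W ω)) = ent p (fun ω => ((X ω, Y ω), W ω)) :=
    ent_congr p (fun q => ((q.1.1, q.2.1), q.1.2)) (fun q => ((q.1.1, q.2), q.1.2, q.2))
      (fun _ => rfl) (fun _ => rfl)
  rw [mi, mi, hXYW, h.ent_comp_pair p hp Prod.fst, h.ent_comp_pair p hp Prod.snd, h.ent_pair p hp]
  dsimp only
  ring

theorem cmi_pair_pair_of_indep {X : Ω → α} {Y : Ω → β} {Z : Ω → γ} {W : Ω → δ}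
    (h : IndepRV p (fun ω => (X ω, Y ω, Z ω)) W) :
    cmi p X (fun ω => (Y ω, W ω)) (fun ω => (Z ω, W ω)) = cmi p X Y Z := by
  have hXZW : ent p (fun ω => (X ω, Z ω, W ω)) = ent p (fun ω => ((X ω, Z ω), W ω)) :=
    (ent_pair_assoc p X Z W).symm
  have hYZW : ent p (fun ω => ((Y ω, W ω), Z ω, W ω)) = ent p (fun ω => ((Y ω, Z ω), W ω)) :=
    ent_congr p (fun q => ((q.1.1, q.2.1), q.1.2)) (fun q => ((q.1.1, q.2), q.1.2, q.2))
      (fun _ => rfl) (fun _ => rfl)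
  have hXYZW : ent p (fun ω => (X ω, (Y ω, W ω), Z ω, W ω))
      = ent p (fun ω => ((X ω, Y ω, Z ω), W ω)) :=
    ent_congr p (fun q => ((q.1, q.2.1.1, q.2.2.1), q.2.1.2))
      (fun q => (q.1.1, (q.1.2.1, q.2), q.1.2.2, q.2)) (fun _ => rfl) (fun _ => rfl)
  rw [cmi, cmi, hXZW, hYZW, hXYZW, h.ent_comp_pair p hp (fun t => (t.1, t.2.2)),
    h.ent_comp_pair p hp (fun t => t.2), h.ent_comp_pair p hp (fun t => t.2.2),
    h.ent_pair p hp]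
  dsimp only
  ring

end Information

section Independence

variable {Ω α β γ δ : Type*} [Fintype Ω] (p : Ω → ℝ) (hp : ∑ ω, p ω = 1)
  {X : Ω → α} {Y : Ω → β} {Z : Ω → γ} {W : Ω → δ}
include hp

theorem pr_triple_eq_mul_of_pr_quad_eq_mul [Fintype δ]
    (h : ∀ a b c d, pr p (fun ω => (X ω, Y ω, Z ω, W ω)) (a, b, c, d)
      = pr p X a * pr p Y b * pr p Z c * pr p W d) (a : α) (b : β) (c : γ) :
    pr p (fun ω => (X ω, Y ω, Z ω)) (a, b, c) = pr p X a * pr p Y b * pr p Z c := by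
  have hquad : ∀ d, pr p (fun ω => ((X ω, Y ω, Z ω), W ω)) ((a, b, c), d)
      = pr p (fun ω => (X ω, Y ω, Z ω, W ω)) (a, b, c, d) :=
    fun d => pr_congr p fun ω => by simp [and_assoc]
  rw [pr_eq_sum_pr_pair p _ W]
  simp only [hquad, h, ← Finset.mul_sum, sum_pr, hp, mul_one]

theorem indepRV_triple_of_pr_quad_eq_mul [Fintype δ]
    (h : ∀ a b c d, pr p (fun ω => (X ω, Y ω, Z ω, W ω)) (a, b, c, d)
      = pr p X a * pr p Y b * pr p Z c * pr p W d) :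
    IndepRV p (fun ω => (X ω, Y ω, Z ω)) W := by
  rintro ⟨a, b, c⟩ d
  rw [pr_congr p (X := fun ω => (X ω, Y ω, Z ω, W ω)) (x := (a, b, c, d))
    fun ω => by simp [and_assoc], h, pr_triple_eq_mul_of_pr_quad_eq_mul p hp h]

theorem indepRV_middle_of_pr_triple_eq_mul [Fintype β]
    (h : ∀ a b c, pr p (fun ω => (X ω, Y ω, Z ω)) (a, b, c) = pr p X a * pr p Y b * pr p Z c) :
    IndepRV p Y (fun ω => (X ω, Z ω)) := by
  have hYXZ : ∀ a b c, pr p (fun ω => (Y ω, X ω, Z ω)) (b, a, c)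
      = pr p (fun ω => (X ω, Y ω, Z ω)) (a, b, c) :=
    fun a b c => pr_congr p fun ω => by simp only [Prod.mk.injEq]; tauto
  have hXZY : ∀ a b c, pr p (fun ω => ((X ω, Z ω), Y ω)) ((a, c), b)
      = pr p (fun ω => (X ω, Y ω, Z ω)) (a, b, c) :=
    fun a b c => pr_congr p fun ω => by simp only [Prod.mk.injEq]; tauto
  rintro b ⟨a, c⟩
  rw [pr_eq_sum_pr_pair p (fun ω => (X ω, Z ω)) Y (a, c)]
  simp only [hYXZ, hXZY, h]
  rw [← Finset.sum_mul, ← Finset.mul_sum, sum_pr, hp]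
  ring

end Independence

section Xor

variable {Ω : Type*} [Fintype Ω] (p : Ω → ℝ) (hp : ∑ ω, p ω = 1) {S W : Ω → Bool}
include hp

theorem pr_xor_true_of_indep (h : IndepRV p S W) (hS : pr p S true = 1 / 2) :
    pr p (fun ω => xor (S ω) (W ω)) true = 1 / 2 := by
  have hS' : pr p S false = 1 / 2 := by
    rw [pr_false_eq_one_sub p hp, hS]
    norm_num
  refine (pr_map p (fun ω => (S ω, W ω)) (fun q : Bool × Bool => xor q.1 q.2) true).trans ?_
  simp only [Fintype.sum_prod_type, Fintype.sum_bool, h _ _, hS, hS', pr_false_eq_one_sub p hp W,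
    Bool.bne_false, Bool.bne_true, Bool.not_true, Bool.not_false, Bool.false_eq_true,
    ↓reduceIte]
  ring

theorem mi_xor_nonneg_of_uniform (h : IndepRV p S W) (hS : pr p S true = 1 / 2) :
    0 ≤ mi p S (fun ω => xor (S ω) (W ω)) := by
  have hpair : ent p (fun ω => (S ω, xor (S ω) (W ω))) = ent p (fun ω => (S ω, W ω)) :=
    ent_congr p (fun q => (q.1, xor q.1 q.2)) (fun q => (q.1, xor q.1 q.2))
      (fun _ => by simp) (fun _ => rfl)
  rw [mi, hpair, h.ent_pair p hp, ent_bool_eq_one p hp (pr_xor_true_of_indep p hp h hS)]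
  linarith [ent_bool_le_one p hp W]

end Xor

/-- **Example 3, evaluation of the inner bound with `V = S`.**  For mutually independent
binary `X₁, S, Z₁, X₂`, `Y₁ = X₁ ⊕ S ⊕ Z₁`, `Y₂ = X₂`, `Y = (Y₁,Y₂)` and `V = S`:
(i) `I(X₁;Y|V,X₂) = I(X₁;Y₁|S)`;
(ii) `I(V,X₁,X₂;Y) - I(V,X₁,X₂;S) = I(X₁;Y₁|S) + I(S;Y₁) + H(X₂) - H(S)`;
(iii) `I(V,X₂;Y) - I(V,X₂;S) = I(S;Y₁|X₂) + H(X₂) - H(S)`.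
Moreover if `X₂` and `S` are uniform then the right-hand side of (ii) is at least
`I(X₁;Y₁|S)` and the right-hand side of (iii) is nonnegative. -/
theorem example3_inner_bound_evaluation
    {Ω : Type*} [Fintype Ω]
    (p : Ω → ℝ) (hp : IsPMF p)
    (X₁ S Z₁ X₂ : Ω → Bool) (Y₁ : Ω → Bool)
    (hIndep : ∀ a b c d : Bool,
      pr p (fun ω => (X₁ ω, S ω, Z₁ ω, X₂ ω)) (a, b, c, d)
        = pr p X₁ a * pr p S b * pr p Z₁ c * pr p X₂ d)
    (hY₁ : ∀ ω, Y₁ ω = Bool.xor (X₁ ω) (Bool.xor (S ω) (Z₁ ω))) :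
    cmi p X₁ (fun ω => (Y₁ ω, X₂ ω)) (fun ω => (S ω, X₂ ω)) = cmi p X₁ Y₁ S ∧
    mi p (fun ω => (S ω, X₁ ω, X₂ ω)) (fun ω => (Y₁ ω, X₂ ω))
        - mi p (fun ω => (S ω, X₁ ω, X₂ ω)) S
      = cmi p X₁ Y₁ S + mi p S Y₁ + ent p X₂ - ent p S ∧
    mi p (fun ω => (S ω, X₂ ω)) (fun ω => (Y₁ ω, X₂ ω))
        - mi p (fun ω => (S ω, X₂ ω)) S
      = cmi p S Y₁ X₂ + ent p X₂ - ent p S ∧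
    (pr p X₂ true = 1/2 → pr p S true = 1/2 →
      cmi p X₁ Y₁ S ≤ cmi p X₁ Y₁ S + mi p S Y₁ + ent p X₂ - ent p S ∧
      0 ≤ cmi p S Y₁ X₂ + ent p X₂ - ent p S) := by
  have hsum := hp.2
  have hY : Y₁ = fun ω => xor (S ω) (xor (X₁ ω) (Z₁ ω)) :=
    funext fun ω => by rw [hY₁, Bool.xor_left_comm]
  have hX₂ : IndepRV p (fun ω => (X₁ ω, S ω, Y₁ ω)) X₂ := by
    rw [hY]
    exact (indepRV_triple_of_pr_quad_eq_mul p hsum hIndep).comp p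
      (fun t => (t.1, t.2.1, xor t.2.1 (xor t.1 t.2.2))) id
  have hS : IndepRV p S (fun ω => xor (X₁ ω) (Z₁ ω)) :=
    (indepRV_middle_of_pr_triple_eq_mul p hsum
      (pr_triple_eq_mul_of_pr_quad_eq_mul p hsum hIndep)).comp p id fun t => xor t.1 t.2
  have hSY₁X₂ : IndepRV p (fun ω => (S ω, Y₁ ω)) X₂ := hX₂.comp p (fun t => (t.2.1, t.2.2)) id
  have hcmi : cmi p S Y₁ X₂ = mi p S Y₁ := cmi_eq_mi_of_indep p hsum hSY₁X₂
  have hVX₂ : mi p (fun ω => (S ω, X₂ ω)) (fun ω => (Y₁ ω, X₂ ω)) = mi p S Y₁ + ent p X₂ :=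
    mi_pair_pair_of_indep p hsum hSY₁X₂
  have hVX₁X₂ : mi p (fun ω => (S ω, X₁ ω, X₂ ω)) (fun ω => (Y₁ ω, X₂ ω))
      = mi p (fun ω => (S ω, X₁ ω)) Y₁ + ent p X₂ := by
    rw [mi_congr_left p (fun q => ((q.1, q.2.1), q.2.2)) (fun q => (q.1.1, q.1.2, q.2))
      (fun _ => rfl) (fun _ => rfl)]
    exact mi_pair_pair_of_indep p hsum (hX₂.comp p (fun t => ((t.2.1, t.1), t.2.2)) id)
  refine ⟨cmi_pair_pair_of_indep p hsum (hX₂.comp p (fun t => (t.1, t.2.2, t.2.1)) id), ?_, ?_, ?_⟩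
  · rw [hVX₁X₂, mi_pair_eq_mi_add_cmi, mi_comp_self p (fun ω => (S ω, X₁ ω, X₂ ω)) Prod.fst]
    ring
  · rw [hVX₂, hcmi, mi_comp_self p (fun ω => (S ω, X₂ ω)) Prod.fst]
  · intro hX₂_unif hS_unif
    have hmi : 0 ≤ mi p S Y₁ := hY ▸ mi_xor_nonneg_of_uniform p hsum hS hS_unif
    rw [hcmi, ent_bool_eq_one p hsum hX₂_unif, ent_bool_eq_one p hsum hS_unif]
    constructor <;> linarith
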